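/- arXiv:2007.05271 — 2 statements merged into one kernel-verified Lean document; each statement's English description precedes it below -/
import Mathlib

section
/- For λ ≥ 1 and any positive semidefinite kernel matrix sequence arising from points with k(z,z) ≤ 1, the posterior standard deviations satisfy ∑_{t=1}^T σ_{t-1}(z_t) ≤ 2√(T λ γ_T), where γ_T = (1/2) log det(I_T + K_T/λ) and σ_{t-1}^2(z_t) = k(z_t,z_t) − k_{t-1}(z_t)^T (K_{t-1} + λ I)^{-1} k_{t-1}(z_t). -/
open Finset Matrix

/-! Adding a point borders `K_t + λI` by one row and column, so its determinant gets
multiplied by the Schur complement `λ + σ_t²`; hence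
`log det (I + K_T / λ) = ∑ log (1 + σ_t² / λ)`. As `0 ≤ σ_t² ≤ k(z_t, z_t) ≤ λ`, each logarithm
is at least `σ_t² / (2λ)`, so `∑ σ_t² ≤ 4λγ_T`, and Cauchy–Schwarz turns this into the bound on
`∑ σ_t`. -/

namespace Real

lemma le_two_mul_log_one_add {x : ℝ} (hx₀ : 0 ≤ x) (hx₁ : x ≤ 1) :
    x ≤ 2 * log (1 + x) := by
  have hpos : 0 < 1 + x := by linarith
  have key : x / 2 ≤ x / (1 + x) := div_le_div_of_nonneg_left hx₀ hpos (by linarith)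
  have hlog : x / (1 + x) ≤ log (1 + x) := by
    have h := one_sub_inv_le_log_of_pos hpos
    rwa [show 1 - (1 + x)⁻¹ = x / (1 + x) by field_simp; ring] at h
  linarith

lemma le_two_mul_mul_log_one_add_div {s c : ℝ} (hs : 0 ≤ s) (hsc : s ≤ c) :
    s ≤ 2 * c * log (1 + s / c) := by
  obtain rfl | hc := (hs.trans hsc).eq_or_lt
  · simp [le_antisymm hsc hs]
  have := le_two_mul_log_one_add (div_nonneg hs hc.le) ((div_le_one hc).2 hsc)
  calc s = c * (s / c) := by field_simp
    _ ≤ c * (2 * log (1 + s / c)) := by gcongr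
    _ = 2 * c * log (1 + s / c) := by ring

lemma sum_sqrt_le_sqrt_card_mul_sum {ι : Type*} (s : Finset ι) {f : ι → ℝ}
    (hf : ∀ i, 0 ≤ f i) :
    ∑ i ∈ s, √(f i) ≤ √(#s * ∑ i ∈ s, f i) := by
  simpa [sqrt_mul (Nat.cast_nonneg _)] using
    sum_sqrt_mul_sqrt_le s (fun _ => zero_le_one) hf

end Real

section Bordered

variable {m : Type*}

def borderedMatrix (A : Matrix m m ℝ) (b : m → ℝ) (c : ℝ) :
    Matrix (m ⊕ Fin 1) (m ⊕ Fin 1) ℝ :=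
  fromBlocks A (replicateCol (Fin 1) b) (replicateCol (Fin 1) b)ᴴ (of fun _ _ => c)

lemma borderedMatrix_add_fromBlocks (A D : Matrix m m ℝ) (b : m → ℝ) (c d : ℝ) :
    borderedMatrix A b c + fromBlocks D 0 0 (of fun _ _ => d)
      = borderedMatrix (A + D) b (c + d) := by
  simp only [borderedMatrix, fromBlocks_add, add_zero]
  congr 1

lemma borderedMatrix_schur_complement_eq [Fintype m] [DecidableEq m] (A : Matrix m m ℝ)
    (b : m → ℝ) (c : ℝ) :
    (of fun _ _ => c) - (replicateCol (Fin 1) b)ᴴ * A⁻¹ * replicateCol (Fin 1) b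
      = of fun _ _ => c - b ⬝ᵥ A⁻¹ *ᵥ b := by
  ext
  simp [← replicateCol_mulVec, ← mulVec_mulVec, replicateRow_mulVec_eq_const]

lemma det_borderedMatrix [Fintype m] [DecidableEq m] (A : Matrix m m ℝ) [Invertible A]
    (b : m → ℝ) (c : ℝ) :
    (borderedMatrix A b c).det = A.det * (c - b ⬝ᵥ A⁻¹ *ᵥ b) := by
  rw [borderedMatrix, det_fromBlocks₁₁, invOf_eq_nonsing_inv, borderedMatrix_schur_complement_eq,
    det_fin_one, of_apply]

lemma schur_complement_nonneg_of_borderedMatrix [Fintype m] [DecidableEq m] {A : Matrix m m ℝ}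
    (hA : A.PosDef) {b : m → ℝ} {c : ℝ} (h : (borderedMatrix A b c).PosSemidef) :
    0 ≤ c - b ⬝ᵥ A⁻¹ *ᵥ b := by
  have := hA.isUnit.invertible
  rw [borderedMatrix, PosDef.fromBlocks₁₁ _ _ hA, borderedMatrix_schur_complement_eq] at h
  exact h.diag_nonneg (i := 0)

end Bordered

noncomputable section Kernel

variable {Z : Type*} (k : Z → Z → ℝ) (z : ℕ → Z)

def kernelMatrix (t : ℕ) : Matrix (Fin t) (Fin t) ℝ := of fun i j => k (z i) (z j)

def kernelVec (t : ℕ) : Fin t → ℝ := fun i => k (z i) (z t)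

/-- Indices start at `0`: `posteriorVar k z lam t` conditions on `z 0, …, z (t - 1)` and is the
paper's `σ²_{t-1}(z_t)` with `t` shifted by one. -/
def posteriorVar (lam : ℝ) (t : ℕ) : ℝ :=
  k (z t) (z t) - kernelVec k z t ⬝ᵥ ((kernelMatrix k z t + lam • 1)⁻¹ *ᵥ kernelVec k z t)

variable {k z}

lemma kernelMatrix_succ_submatrix {t : ℕ} (h : (kernelMatrix k z (t + 1)).IsHermitian) :
    (kernelMatrix k z (t + 1)).submatrix finSumFinEquiv finSumFinEquiv
      = borderedMatrix (kernelMatrix k z t) (kernelVec k z t) (k (z t) (z t)) := by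
  have hsymm (i : Fin t) : k (z t) (z i) = k (z i) (z t) := by
    simpa [kernelMatrix] using h.apply (Fin.castSucc i) (Fin.last t)
  ext (i | i) (j | j) <;>
    simp [kernelMatrix, kernelVec, borderedMatrix, Fin.val_eq_zero, hsymm]

lemma kernelMatrix_add_smul_one_succ_submatrix {t : ℕ}
    (h : (kernelMatrix k z (t + 1)).IsHermitian) (lam : ℝ) :
    (kernelMatrix k z (t + 1) + lam • 1).submatrix finSumFinEquiv finSumFinEquiv
      = borderedMatrix (kernelMatrix k z t + lam • 1) (kernelVec k z t)
          (k (z t) (z t) + lam) := by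
  simp only [submatrix_add, submatrix_smul, Pi.add_apply, Pi.smul_apply]
  rw [submatrix_one_equiv, kernelMatrix_succ_submatrix h,
    ← borderedMatrix_add_fromBlocks, ← fromBlocks_one, fromBlocks_smul]
  simp only [smul_zero]
  congr 2
  ext i j
  simp [Subsingleton.elim i j]

lemma kernelMatrix_add_smul_one_posDef {t : ℕ} (hK : (kernelMatrix k z t).PosSemidef) {lam : ℝ}
    (hlam : 0 < lam) : (kernelMatrix k z t + lam • 1).PosDef :=
  PosDef.posSemidef_add hK (PosDef.one.smul hlam)

lemma posteriorVar_nonneg {t : ℕ} (hK : (kernelMatrix k z (t + 1)).PosSemidef) {lam : ℝ}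
    (hlam : 0 < lam) : 0 ≤ posteriorVar k z lam t := by
  have hA := kernelMatrix_add_smul_one_posDef (hK.submatrix Fin.castSucc) hlam
  have hD : (fromBlocks (lam • 1 : Matrix (Fin t) (Fin t) ℝ) 0 0
      (of fun _ _ => 0 : Matrix (Fin 1) (Fin 1) ℝ)).PosSemidef := by
    rw [smul_one_eq_diagonal, show (of fun _ _ => (0 : ℝ)) = diagonal (0 : Fin 1 → ℝ) by
      ext; simp, fromBlocks_diagonal]
    exact PosSemidef.diagonal (by rintro (_ | _) <;> simp [hlam.le])
  -- regularizing only the top-left block keeps the bordered matrix positive semidefinite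
  have h := (hK.submatrix finSumFinEquiv).add hD
  rw [kernelMatrix_succ_submatrix hK.isHermitian, borderedMatrix_add_fromBlocks, add_zero] at h
  exact schur_complement_nonneg_of_borderedMatrix hA h

lemma posteriorVar_le_kernel_diag {t : ℕ} (hK : (kernelMatrix k z t).PosSemidef) {lam : ℝ}
    (hlam : 0 ≤ lam) :
    posteriorVar k z lam t ≤ k (z t) (z t) := by
  have := (hK.add (PosSemidef.one.smul hlam)).inv.dotProduct_mulVec_nonneg (kernelVec k z t)
  simp only [star_trivial] at this
  rw [posteriorVar]
  linarith

lemma det_kernelMatrix_add_smul_one_succ {t : ℕ} (hK : (kernelMatrix k z (t + 1)).PosSemidef)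
    {lam : ℝ} (hlam : 0 < lam) :
    (kernelMatrix k z (t + 1) + lam • 1).det
      = (kernelMatrix k z t + lam • 1).det * (lam + posteriorVar k z lam t) := by
  have := (kernelMatrix_add_smul_one_posDef (hK.submatrix Fin.castSucc) hlam).isUnit.invertible
  rw [← det_submatrix_equiv_self finSumFinEquiv, kernelMatrix_add_smul_one_succ_submatrix
    hK.isHermitian, det_borderedMatrix, posteriorVar]
  ring

lemma det_kernelMatrix_add_smul_one (hK : ∀ n, (kernelMatrix k z n).PosSemidef) {lam : ℝ}
    (hlam : 0 < lam) (T : ℕ) :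
    (kernelMatrix k z T + lam • 1).det = ∏ t ∈ range T, (lam + posteriorVar k z lam t) := by
  induction T with
  | zero => simp [det_isEmpty]
  | succ T ih => rw [det_kernelMatrix_add_smul_one_succ (hK _) hlam, ih, prod_range_succ]

lemma log_det_one_add_inv_smul_kernelMatrix (hK : ∀ n, (kernelMatrix k z n).PosSemidef)
    {lam : ℝ} (hlam : 0 < lam) (T : ℕ) :
    Real.log (1 + lam⁻¹ • kernelMatrix k z T).det
      = ∑ t ∈ range T, Real.log (1 + posteriorVar k z lam t / lam) := by
  have hdet : (1 + lam⁻¹ • kernelMatrix k z T).det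
      = ∏ t ∈ range T, (1 + posteriorVar k z lam t / lam) := by
    rw [show 1 + lam⁻¹ • kernelMatrix k z T = lam⁻¹ • (kernelMatrix k z T + lam • 1) by
        rw [smul_add, smul_smul, inv_mul_cancel₀ hlam.ne', one_smul, add_comm],
      det_smul, det_kernelMatrix_add_smul_one hK hlam, Fintype.card_fin, ← card_range T,
      ← prod_const, card_range, ← prod_mul_distrib]
    refine prod_congr rfl fun t _ => ?_
    field_simp
  rw [hdet, Real.log_prod fun t _ => ?_]
  have := posteriorVar_nonneg (hK (t + 1)) hlam
  positivity

lemma sum_posteriorVar_le (hK : ∀ n, (kernelMatrix k z n).PosSemidef) {lam : ℝ} (hlam : 0 < lam)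
    (hdiag : ∀ t, k (z t) (z t) ≤ lam) (T : ℕ) :
    ∑ t ∈ range T, posteriorVar k z lam t
      ≤ 2 * lam * Real.log (1 + lam⁻¹ • kernelMatrix k z T).det := by
  rw [log_det_one_add_inv_smul_kernelMatrix hK hlam, mul_sum]
  exact sum_le_sum fun t _ => Real.le_two_mul_mul_log_one_add_div
    (posteriorVar_nonneg (hK _) hlam)
    ((posteriorVar_le_kernel_diag (hK t) hlam.le).trans (hdiag t))

end Kernel

/-- sum of posterior standard deviations bounded via information gain. -/
theorem sum_posterior_std_le {Z : Type*}
    (k : Z → Z → ℝ)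
    (hPSD : ∀ (n : ℕ) (w : Fin n → Z),
      (Matrix.of fun i j => k (w i) (w j) : Matrix (Fin n) (Fin n) ℝ).PosSemidef)
    (hbdd : ∀ z, k z z ≤ 1)
    (lam : ℝ) (hlam : 1 ≤ lam)
    (z : ℕ → Z) (T : ℕ)
    (K : (t : ℕ) → Matrix (Fin t) (Fin t) ℝ)
    (hK : ∀ t, K t = Matrix.of fun i j : Fin t => k (z i) (z j))
    (σsq : ℕ → ℝ)
    (hσsq : ∀ t, σsq t =
      k (z t) (z t) -
        (fun i : Fin t => k (z i) (z t)) ⬝ᵥ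
          ((K t + lam • (1 : Matrix (Fin t) (Fin t) ℝ))⁻¹ *ᵥ fun i : Fin t => k (z i) (z t)))
    (γ : ℝ)
    (hγ : γ = (1 / 2) * Real.log ((1 + lam⁻¹ • K T : Matrix (Fin T) (Fin T) ℝ).det)) :
    ∑ t ∈ range T, Real.sqrt (σsq t) ≤ 2 * Real.sqrt (T * lam * γ) := by
  obtain rfl : K = kernelMatrix k z := funext hK
  obtain rfl : σsq = posteriorVar k z lam := funext hσsq
  have hKpsd (n : ℕ) : (kernelMatrix k z n).PosSemidef := hPSD n fun i => z i
  have hlam₀ : 0 < lam := one_pos.trans_le hlam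
  have hsum : ∑ t ∈ range T, posteriorVar k z lam t ≤ 4 * lam * γ := by
    rw [hγ]
    linarith [sum_posteriorVar_le hKpsd hlam₀ (fun t => (hbdd _).trans hlam) T]
  calc ∑ t ∈ range T, √(posteriorVar k z lam t)
      ≤ √(T * ∑ t ∈ range T, posteriorVar k z lam t) := by
        simpa using Real.sum_sqrt_le_sqrt_card_mul_sum (range T)
          fun t => posteriorVar_nonneg (hKpsd (t + 1)) hlam₀
    _ ≤ √(2 ^ 2 * (T * lam * γ)) := by
        refine Real.sqrt_le_sqrt ?_
        linarith [mul_le_mul_of_nonneg_left hsum (Nat.cast_nonneg (α := ℝ) T)]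
    _ = 2 * √(T * lam * γ) := by rw [Real.sqrt_mul (by positivity), Real.sqrt_sq zero_le_two]
end

section
/- Hedge/exponential-weights regret bound (deterministic, full information): for bounded rewards r̃_t : X → [0,1] on a finite set X, the exponential-weights expected reward satisfies max_{x∈X} ∑_{t=1}^T r̃_t(x) − ∑_{t=1}^T ⟨p_t, r̃_t⟩ ≤ log|X|/η + η T/8, which for η = √(8 log|X|/T) yields a bound of √((T/2) log|X|). -/
/-!
Let `W_t = ∑ₓ exp (η ∑_{s<t} r̃_s(x))` be the normalizer of the exponential weights, so that
`p_t = exp (η ∑_{s<t} r̃_s) / W_t` and `W_{t+1} / W_t = ∑ₓ p_t[x] exp (η r̃_t(x))`. Hoeffding's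
lemma bounds this ratio by `exp (η ⟨p_t, r̃_t⟩ + η² / 8)`; telescoping from `W_0 = |X|` and
bounding `W_T` below by its largest term `exp (η max_x ∑_t r̃_t(x))` gives the regret bound
after taking logarithms. The tuned `η` makes both terms equal to `√(T log|X| / 8)`.
-/

open Finset

/-- Multiplicative-weights iterates with uniform initialization. -/
noncomputable def hedgeStrategy {X : Type*} [Fintype X] (η : ℝ) (r : ℕ → X → ℝ) :
    ℕ → X → ℝ
  | 0 => fun _ => 1 / (Fintype.card X : ℝ)
  | (t + 1) => fun x =>
      hedgeStrategy η r t x * Real.exp (η * r t x) /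
        ∑ x' : X, hedgeStrategy η r t x' * Real.exp (η * r t x')

open Real MeasureTheory ProbabilityTheory

lemma sum_mul_exp_le_of_mem_Icc {ι : Type*} [Fintype ι] {p f : ι → ℝ} {a b : ℝ}
    (hp : ∀ i, 0 ≤ p i) (hp1 : ∑ i, p i = 1) (hf : ∀ i, f i ∈ Set.Icc a b) (s : ℝ) :
    ∑ i, p i * exp (s * f i) ≤ exp (s * ∑ i, p i * f i + (b - a) ^ 2 * s ^ 2 / 8) := by
  -- Read the weights `p` as a probability measure, so that Hoeffding's lemma applies.
  let _ : MeasurableSpace ι := ⊤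
  set μ : Measure ι := ∑ j, ENNReal.ofReal (p j) • Measure.dirac j
  have hμ (g : ι → ℝ) : ∫ i, g i ∂μ = ∑ i, p i * g i := by
    rw [integral_finsetSum_measure fun _ _ =>
      Integrable.of_finite.smul_measure ENNReal.ofReal_ne_top]
    simp [integral_smul_measure, hp]
  have : IsProbabilityMeasure μ := by
    constructor
    simp [μ, ← ENNReal.ofReal_sum_of_nonneg (fun i _ => hp i), hp1]
  have hoeffding := (hasSubgaussianMGF_of_mem_Icc (μ := μ) (by fun_prop) (ae_of_all _ hf)).mgf_le s
  simp only [mgf, hμ] at hoeffding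
  set m := ∑ i, p i * f i
  have hc : ((‖b - a‖₊ / 2) ^ 2 : NNReal) * s ^ 2 / 2 = (b - a) ^ 2 * s ^ 2 / 8 := by
    push_cast; rw [norm_eq_abs, div_pow, sq_abs]; ring
  calc ∑ i, p i * exp (s * f i) = exp (s * m) * ∑ i, p i * exp (s * (f i - m)) := by
        rw [mul_sum]; congr! 1 with i; rw [mul_left_comm, ← exp_add]; ring_nf
    _ ≤ exp (s * m) * exp ((b - a) ^ 2 * s ^ 2 / 8) := by
        rw [← hc]; gcongr
    _ = _ := (exp_add _ _).symm

lemma exp_mul_sum_range_succ (η : ℝ) (f : ℕ → ℝ) (t : ℕ) :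
    exp (η * ∑ s ∈ range (t + 1), f s) = exp (η * ∑ s ∈ range t, f s) * exp (η * f t) := by
  rw [sum_range_succ, mul_add, exp_add]

lemma div_add_mul_div_eight_eq_sqrt {L T η : ℝ} (hT : 0 ≤ T) (hη : 0 < η)
    (h : η = √(8 * L / T)) : L / η + η * T / 8 = √(T / 2 * L) := by
  have hLT : 0 < 8 * L / T := sqrt_pos.1 (h ▸ hη)
  have hT0 : T ≠ 0 := by rintro rfl; simp at hLT
  have hη2 : η ^ 2 * T = 8 * L := by rw [h, sq_sqrt hLT.le, div_mul_cancel₀ _ hT0]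
  calc L / η + η * T / 8 = η * T / 4 := by field_simp; linear_combination -4 * hη2
    _ = √((η * T / 4) ^ 2) := (sqrt_sq (by positivity)).symm
    _ = √(T / 2 * L) := by congr 1; linear_combination T / 16 * hη2

noncomputable def hedgePotential {X : Type*} [Fintype X] (η : ℝ) (r : ℕ → X → ℝ) (t : ℕ) : ℝ :=
  ∑ x, exp (η * ∑ s ∈ range t, r s x)

section Hedge

variable {X : Type*} [Fintype X] (η : ℝ) (r : ℕ → X → ℝ)

lemma hedgePotential_zero : hedgePotential η r 0 = Fintype.card X := by
  simp [hedgePotential]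

variable [Nonempty X]

lemma hedgePotential_pos (t : ℕ) : 0 < hedgePotential η r t :=
  sum_pos (fun _ _ => exp_pos _) univ_nonempty

lemma hedgeStrategy_eq_exp_div_hedgePotential (t : ℕ) (x : X) :
    hedgeStrategy η r t x = exp (η * ∑ s ∈ range t, r s x) / hedgePotential η r t := by
  induction t generalizing x with
  | zero => simp [hedgeStrategy, hedgePotential]
  | succ t ih =>
    simp only [hedgeStrategy, ih, div_mul_eq_mul_div, ← exp_mul_sum_range_succ, ← sum_div]
    rw [div_div_div_cancel_right₀ (hedgePotential_pos η r t).ne']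
    rfl

lemma hedgeStrategy_nonneg (t : ℕ) (x : X) : 0 ≤ hedgeStrategy η r t x := by
  rw [hedgeStrategy_eq_exp_div_hedgePotential]
  exact div_nonneg (exp_pos _).le (hedgePotential_pos η r t).le

lemma sum_hedgeStrategy (t : ℕ) : ∑ x, hedgeStrategy η r t x = 1 := by
  simp only [hedgeStrategy_eq_exp_div_hedgePotential, ← sum_div]
  exact div_self (hedgePotential_pos η r t).ne'

lemma hedgePotential_succ (t : ℕ) :
    hedgePotential η r (t + 1) =
      hedgePotential η r t * ∑ x, hedgeStrategy η r t x * exp (η * r t x) := by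
  rw [hedgePotential, mul_sum]
  congr! 1 with x
  rw [exp_mul_sum_range_succ, hedgeStrategy_eq_exp_div_hedgePotential,
    ← mul_assoc, mul_div_cancel₀ _ (hedgePotential_pos η r t).ne']

lemma log_hedgePotential_succ_le (t : ℕ) (hr : ∀ x, r t x ∈ Set.Icc (0 : ℝ) 1) :
    log (hedgePotential η r (t + 1)) ≤
      log (hedgePotential η r t) + η * ∑ x, hedgeStrategy η r t x * r t x + η ^ 2 / 8 := by
  have hoeffding := sum_mul_exp_le_of_mem_Icc (hedgeStrategy_nonneg η r t)
    (sum_hedgeStrategy η r t) hr η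
  rw [sub_zero, one_pow, one_mul] at hoeffding
  have hZ := hedgePotential_pos η r t
  have hratio : 0 < ∑ x, hedgeStrategy η r t x * exp (η * r t x) :=
    (mul_pos_iff_of_pos_left hZ).1 (hedgePotential_succ η r t ▸ hedgePotential_pos η r (t + 1))
  calc log (hedgePotential η r (t + 1))
      = log (hedgePotential η r t) + log (∑ x, hedgeStrategy η r t x * exp (η * r t x)) := by
        rw [hedgePotential_succ, log_mul hZ.ne' hratio.ne']
    _ ≤ log (hedgePotential η r t) + (η * ∑ x, hedgeStrategy η r t x * r t x + η ^ 2 / 8) := by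
        rwa [add_le_add_iff_left, log_le_iff_le_exp hratio]
    _ = _ := (add_assoc _ _ _).symm

lemma log_hedgePotential_le (hr : ∀ t x, r t x ∈ Set.Icc (0 : ℝ) 1) (T : ℕ) :
    log (hedgePotential η r T) ≤ log (Fintype.card X) +
      η * ∑ t ∈ range T, ∑ x, hedgeStrategy η r t x * r t x + T * η ^ 2 / 8 := by
  induction T with
  | zero => simp [hedgePotential_zero]
  | succ T ih =>
    have := log_hedgePotential_succ_le η r T (hr T)
    rw [sum_range_succ]
    push_cast
    linarith

lemma mul_sum_le_log_hedgePotential (T : ℕ) (x : X) :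
    η * ∑ t ∈ range T, r t x ≤ log (hedgePotential η r T) :=
  (le_log_iff_exp_le (hedgePotential_pos η r T)).2 <|
    single_le_sum (f := fun y => exp (η * ∑ t ∈ range T, r t y)) (fun _ _ => (exp_pos _).le)
      (mem_univ x)

lemma hedge_regret_le (hη : 0 < η) (hr : ∀ t x, r t x ∈ Set.Icc (0 : ℝ) 1) (T : ℕ) :
    (univ.sup' univ_nonempty fun x => ∑ t ∈ range T, r t x)
        - ∑ t ∈ range T, ∑ x, hedgeStrategy η r t x * r t x
      ≤ log (Fintype.card X) / η + η * T / 8 := by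
  rw [sub_le_iff_le_add, sup'_le_iff]
  intro x _
  have := (mul_sum_le_log_hedgePotential η r T x).trans (log_hedgePotential_le η r hr T)
  rw [← le_div_iff₀' hη] at this
  convert this using 1
  field_simp
  ring

end Hedge

theorem hedge_regret_bound_general {X : Type*} [Fintype X] [Nonempty X]
    (η : ℝ) (hη : 0 < η) (T : ℕ)
    (r : ℕ → X → ℝ) (hr : ∀ t x, r t x ∈ Set.Icc (0 : ℝ) 1) :
    (univ.sup' univ_nonempty fun x => ∑ t ∈ range T, r t x)
        - ∑ t ∈ range T, ∑ x : X, hedgeStrategy η r t x * r t x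
      ≤ Real.log (Fintype.card X) / η + η * T / 8 ∧
    (η = Real.sqrt (8 * Real.log (Fintype.card X) / T) →
      (univ.sup' univ_nonempty fun x => ∑ t ∈ range T, r t x)
          - ∑ t ∈ range T, ∑ x : X, hedgeStrategy η r t x * r t x
        ≤ Real.sqrt ((T / 2 : ℝ) * Real.log (Fintype.card X))) :=
  ⟨hedge_regret_le η r hη hr T, fun hη_tuned =>
    (hedge_regret_le η r hη hr T).trans_eq
      (div_add_mul_div_eight_eq_sqrt (Nat.cast_nonneg T) hη hη_tuned)⟩

/-- Hedge regret bound with full-information feedback. -/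
theorem hedge_regret_bound {X : Type*} [Fintype X] [Nonempty X]
    (η : ℝ) (hη : 0 < η) (T : ℕ) (hT : 1 ≤ T)
    (r : ℕ → X → ℝ) (hr : ∀ t x, r t x ∈ Set.Icc (0 : ℝ) 1) :
    (univ.sup' univ_nonempty fun x => ∑ t ∈ range T, r t x)
        - ∑ t ∈ range T, ∑ x : X, hedgeStrategy η r t x * r t x
      ≤ Real.log (Fintype.card X) / η + η * T / 8 ∧
    (η = Real.sqrt (8 * Real.log (Fintype.card X) / T) →
      (univ.sup' univ_nonempty fun x => ∑ t ∈ range T, r t x)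
          - ∑ t ∈ range T, ∑ x : X, hedgeStrategy η r t x * r t x
        ≤ Real.sqrt ((T / 2 : ℝ) * Real.log (Fintype.card X))) :=
  hedge_regret_bound_general η hη T r hr
end
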